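/- arXiv:2510.18755 — 4 statements merged into one kernel-verified Lean document; each statement's English description precedes it below -/
import Mathlib

section
/- For a continuous real-valued function φ on an interval I ⊂ ℝ₊, the λ-jump counting function N_λ(φ) — the supremum of J ∈ ℕ such that there exist points t₁ < t₂ < ⋯ < t_J in I with |φ(t_i) − φ(t_{i−1})| > λ for i = 2,…,J — satisfies the quasi-subadditivity property N_λ(φ + ψ; I) ≤ 2 (N_{λ/4}(φ; I) + N_{λ/4}(ψ; I)) for all continuous φ, ψ on I and all λ > 0. -/
/-!
Each step of a chain along which `φ + ψ` jumps by more than `λ` is a jump of more than `λ/2`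
of `φ` or of `ψ`. From the `k` steps where `φ` jumps by more than `λ/2` one extracts, greedily
from the right, a sub-chain of `k + 1` points along which `φ` jumps by more than `λ/4`; likewise
for `ψ`. Hence `N_λ(φ + ψ) ≤ N_{λ/4}(φ) + N_{λ/4}(ψ)`.
-/

open Set

/-- The `λ`-jump counting function of `φ` on `I`: the supremum of the number `J` of points
`t₁ < t₂ < ⋯ < t_J` in `I` such that consecutive increments of `φ` exceed `λ`. -/
noncomputable def jumpCount (φ : ℝ → ℝ) (I : Set ℝ) (lam : ℝ) : ℕ∞ :=
  sSup {N : ℕ∞ | ∃ J : ℕ, N = (J : ℕ∞) ∧ ∃ t : ℕ → ℝ,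
    (∀ i < J, t i ∈ I) ∧ (∀ i, i + 1 < J → t i < t (i + 1)) ∧
    (∀ i, i + 1 < J → lam < |φ (t (i + 1)) - φ (t i)|)}

section CountJumps

variable {α E : Type*} [PseudoMetricSpace E]

noncomputable def countJumps (f : α → E) (μ : ℝ) : List α → ℕ
  | x :: y :: l => (if μ < dist (f x) (f y) then 1 else 0) + countJumps f μ (y :: l)
  | _ => 0

theorem length_le_countJumps_add_one {f : α → E} {μ : ℝ} :
    ∀ {l : List α}, l.IsChain (fun x y => μ < dist (f x) (f y)) → l.length ≤ countJumps f μ l + 1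
  | [], _ | [_], _ => by simp
  | x :: y :: l, h => by
    rw [List.isChain_cons_cons] at h
    have := length_le_countJumps_add_one h.2
    simp only [countJumps, if_pos h.1, List.length_cons] at this ⊢
    omega

theorem countJumps_add_le {F : Type*} [SeminormedAddCommGroup F] (f g : α → F) (a b : ℝ) :
    ∀ l : List α, countJumps (f + g) (a + b) l ≤ countJumps f a l + countJumps g b l
  | [] | [_] => by simp [countJumps]
  | x :: y :: l => by
    have hsplit : dist ((f + g) x) ((f + g) y) ≤ dist (f x) (f y) + dist (g x) (g y) :=
      dist_add_add_le _ _ _ _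
    have := countJumps_add_le f g a b (y :: l)
    simp only [countJumps]
    split_ifs <;> first | omega | linarith

/-- A jump of size `> 2μ` between `x` and `y` can be kept either
as `x` or as `y` in front of the chain built for the tail, since `f` cannot be `μ`-close to
both `f x` and `f y`. -/
theorem exists_sublist_isChain_countJumps_le (f : α → E) (μ : ℝ) :
    ∀ l : List α, l ≠ [] → ∃ l' : List α, l'.Sublist l ∧
      l'.IsChain (fun x y => μ < dist (f x) (f y)) ∧ countJumps f (2 * μ) l + 1 ≤ l'.length
  | [], h => absurd rfl h
  | [x], _ => ⟨[x], List.Sublist.refl _, by simp, by simp [countJumps]⟩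
  | x :: y :: l, _ => by
    obtain ⟨l', hsub, hchain, hlen⟩ := exists_sublist_isChain_countJumps_le f μ (y :: l) (by simp)
    obtain _ | ⟨h, t⟩ := l'
    · simp at hlen
    by_cases hbig : 2 * μ < dist (f x) (f y)
    · by_cases hx : μ < dist (f x) (f h)
      · refine ⟨x :: h :: t, hsub.cons_cons x, List.IsChain.cons_cons hx hchain, ?_⟩
        simp only [countJumps, if_pos hbig, List.length_cons] at hlen ⊢
        omega
      · have hy : μ < dist (f y) (f h) := by
          have := dist_triangle (f x) (f h) (f y)
          rw [dist_comm (f h)] at this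
          linarith
        have hrest : (h :: t).Sublist l := by
          rcases List.sublist_cons_iff.mp hsub with hsub | ⟨r, hr, -⟩
          · exact hsub
          · obtain rfl : h = y := (List.cons.inj hr).1
            rw [dist_self] at hy
            linarith [dist_nonneg (x := f x) (y := f h)]
        refine ⟨y :: h :: t, (hrest.cons_cons y).cons x, List.IsChain.cons_cons hy hchain, ?_⟩
        simp only [countJumps, if_pos hbig, List.length_cons] at hlen ⊢
        omega
    · refine ⟨h :: t, hsub.cons x, hchain, ?_⟩
      simpa only [countJumps, if_neg hbig, zero_add] using hlen

end CountJumps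

def IsJumpChain (φ : ℝ → ℝ) (I : Set ℝ) (μ : ℝ) (l : List ℝ) : Prop :=
  (∀ x ∈ l, x ∈ I) ∧ l.IsChain (· < ·) ∧ l.IsChain (fun x y => μ < dist (φ x) (φ y))

theorem jumpCount_eq_iSup (φ : ℝ → ℝ) (I : Set ℝ) (μ : ℝ) :
    jumpCount φ I μ = ⨆ (l : List ℝ) (_ : IsJumpChain φ I μ l), (l.length : ℕ∞) := by
  apply le_antisymm
  · refine sSup_le ?_
    rintro _ ⟨J, rfl, t, htI, hmono, hjump⟩
    refine le_iSup₂_of_le ((List.range J).map t) ⟨?_, ?_, ?_⟩ (by simp)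
    · simpa using htI
    · simpa [List.isChain_map, List.isChain_range] using fun i hi => hmono i (by omega)
    · simpa [List.isChain_map, List.isChain_range, Real.dist_eq, abs_sub_comm] using
        fun i hi => hjump i (by omega)
  · refine iSup₂_le fun l ⟨hI, hmono, hjump⟩ => le_sSup ⟨l.length, rfl, fun i => l.getD i 0, ?_⟩
    refine ⟨fun i hi => ?_, fun i hi => ?_, fun i hi => ?_⟩
    · simpa [List.getElem?_eq_getElem hi] using hI _ (l.getElem_mem hi)
    · simpa [List.getElem?_eq_getElem hi, List.getElem?_eq_getElem (Nat.lt_of_succ_lt hi)]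
        using hmono.getElem i hi
    · simpa [List.getElem?_eq_getElem hi, List.getElem?_eq_getElem (Nat.lt_of_succ_lt hi),
        Real.dist_eq, abs_sub_comm] using hjump.getElem i hi

theorem countJumps_add_one_le_jumpCount (φ : ℝ → ℝ) {I : Set ℝ} (μ : ℝ) {l : List ℝ}
    (hI : ∀ x ∈ l, x ∈ I) (hmono : l.IsChain (· < ·)) (hne : l ≠ []) :
    ((countJumps φ (2 * μ) l + 1 : ℕ) : ℕ∞) ≤ jumpCount φ I μ := by
  obtain ⟨l', hsub, hjump, hlen⟩ := exists_sublist_isChain_countJumps_le φ μ l hne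
  rw [jumpCount_eq_iSup]
  exact le_iSup₂_of_le l' ⟨fun x hx => hI x (hsub.subset hx), hmono.sublist hsub, hjump⟩
    (Nat.cast_le.mpr hlen)

theorem jumpCount_quasi_subadd_general
    (I : Set ℝ) (φ ψ : ℝ → ℝ) (lam : ℝ) :
    jumpCount (φ + ψ) I lam ≤
      2 * (jumpCount φ I (lam / 4) + jumpCount ψ I (lam / 4)) := by
  rw [jumpCount_eq_iSup]
  refine iSup₂_le fun l ⟨hI, hmono, hjump⟩ => ?_
  rcases eq_or_ne l [] with rfl | hne
  · simp
  have hsplit : l.length ≤ (countJumps φ (2 * (lam / 4)) l + 1) +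
      (countJumps ψ (2 * (lam / 4)) l + 1) := by
    have hadd := countJumps_add_le φ ψ (2 * (lam / 4)) (2 * (lam / 4)) l
    rw [show 2 * (lam / 4) + 2 * (lam / 4) = lam by ring] at hadd
    have hlen := length_le_countJumps_add_one hjump
    omega
  calc (l.length : ℕ∞)
      ≤ ((countJumps φ (2 * (lam / 4)) l + 1 : ℕ) : ℕ∞) +
          ((countJumps ψ (2 * (lam / 4)) l + 1 : ℕ) : ℕ∞) := by exact_mod_cast hsplit
    _ ≤ jumpCount φ I (lam / 4) + jumpCount ψ I (lam / 4) :=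
        add_le_add (countJumps_add_one_le_jumpCount φ _ hI hmono hne)
          (countJumps_add_one_le_jumpCount ψ _ hI hmono hne)
    _ ≤ 2 * (jumpCount φ I (lam / 4) + jumpCount ψ I (lam / 4)) :=
        le_mul_of_one_le_left zero_le one_le_two

theorem jumpCount_quasi_subadd
    (I : Set ℝ) (hI : I.OrdConnected) (hIpos : I ⊆ Set.Ioi (0 : ℝ))
    (φ ψ : ℝ → ℝ) (hφ : ContinuousOn φ I) (hψ : ContinuousOn ψ I)
    (lam : ℝ) (hlam : 0 < lam) :
    jumpCount (φ + ψ) I lam ≤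
      2 * (jumpCount φ I (lam / 4) + jumpCount ψ I (lam / 4)) :=
  jumpCount_quasi_subadd_general I φ ψ lam
end

section
/- With Q symmetric positive definite and B having all eigenvalues with negative real part, the covariance matrices Q_t = ∫₀^t e^{sB} Q e^{sB*} ds satisfy the operator norm bound ‖Q_t^{-1}‖ ≤ C / t for 0 < t < 1, with C depending only on Q and B. -/
open MeasureTheory Matrix

attribute [local instance] Matrix.linftyOpNormedAddCommGroup Matrix.linftyOpNormedSpace
  Matrix.linftyOpNormedRing Matrix.linftyOpNormedAlgebra

/-- All complex eigenvalues of the real matrix `B` have negative real part. -/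
def eigenvaluesNegRe {n : ℕ} (B : Matrix (Fin n) (Fin n) ℝ) : Prop :=
  ∀ μ ∈ spectrum ℂ (B.map (Complex.ofReal : ℝ → ℂ)), μ.re < 0

/-- The covariance matrix `Q_t = ∫₀^t e^{sB} Q e^{sB^*} ds`. -/
noncomputable def Qmat {n : ℕ} (Q B : Matrix (Fin n) (Fin n) ℝ) (t : ℝ) :
    Matrix (Fin n) (Fin n) ℝ :=
  ∫ s in (0:ℝ)..t, NormedSpace.exp (s • B) * Q * (NormedSpace.exp (s • B))ᵀ

/-- The covariance matrix `Q_∞ = ∫₀^∞ e^{sB} Q e^{sB^*} ds`. -/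
noncomputable def Qinf {n : ℕ} (Q B : Matrix (Fin n) (Fin n) ℝ) :
    Matrix (Fin n) (Fin n) ℝ :=
  ∫ s in Set.Ioi (0:ℝ), NormedSpace.exp (s • B) * Q * (NormedSpace.exp (s • B))ᵀ
/-!
For `s ∈ [0, 1]` the integrand `e^{sB} Q e^{sBᵀ}` is positive definite and continuous in `s`, so by
compactness `xᵀ e^{sB} Q e^{sBᵀ} x ≥ c ‖x‖²` uniformly in `s`. Integrating over `[0, t]` gives
`xᵀ Q_t x ≥ c t ‖x‖²`, and such a lower bound on the quadratic form of a matrix bounds the norm of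
its inverse: `‖Q_t⁻¹‖ ≤ n / (c t)`.
-/

variable {ι : Type*} [Fintype ι]

theorem abs_dotProduct_le_card_mul_norm_mul_norm (x y : ι → ℝ) :
    |x ⬝ᵥ y| ≤ Fintype.card ι * (‖x‖ * ‖y‖) :=
  calc |x ⬝ᵥ y| ≤ ∑ i, |x i * y i| := Finset.abs_sum_le_sum_abs _ _
    _ ≤ ∑ _i : ι, ‖x‖ * ‖y‖ := Finset.sum_le_sum fun i _ => by
        rw [abs_mul]
        exact mul_le_mul (norm_le_pi_norm x i) (norm_le_pi_norm y i) (abs_nonneg _) (norm_nonneg _)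
    _ = Fintype.card ι * (‖x‖ * ‖y‖) := by simp

theorem Matrix.linfty_opNorm_le_of_mulVec_le {m : Type*} [Fintype m] {A : Matrix m ι ℝ} {K : ℝ}
    (hK : 0 ≤ K) (h : ∀ x, ‖A *ᵥ x‖ ≤ K * ‖x‖) : ‖A‖ ≤ K := by
  rw [linfty_opNorm_eq_opNorm]
  exact ContinuousLinearMap.opNorm_le_bound _ hK h

/-- `‖x‖` is the sup norm on `ι → ℝ`, which is why `Fintype.card ι` enters the bounds below. -/
def Matrix.CoerciveWith (ε : ℝ) (A : Matrix ι ι ℝ) : Prop :=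
  ∀ x : ι → ℝ, ε * ‖x‖ ^ 2 ≤ x ⬝ᵥ (A *ᵥ x)

namespace Matrix.CoerciveWith

variable {A : Matrix ι ι ℝ} {ε : ℝ}

theorem mul_norm_le_card_mul_norm_mulVec (h : A.CoerciveWith ε) (x : ι → ℝ) :
    ε * ‖x‖ ≤ Fintype.card ι * ‖A *ᵥ x‖ := by
  rcases (norm_nonneg x).eq_or_lt with hx | hx
  · rw [← hx, mul_zero]
    positivity
  refine le_of_mul_le_mul_left ?_ hx
  calc ‖x‖ * (ε * ‖x‖) = ε * ‖x‖ ^ 2 := by ring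
    _ ≤ |x ⬝ᵥ (A *ᵥ x)| := (h x).trans (le_abs_self _)
    _ ≤ Fintype.card ι * (‖x‖ * ‖A *ᵥ x‖) := abs_dotProduct_le_card_mul_norm_mul_norm _ _
    _ = ‖x‖ * (Fintype.card ι * ‖A *ᵥ x‖) := by ring

variable [DecidableEq ι]

theorem isUnit (h : A.CoerciveWith ε) (hε : 0 < ε) : IsUnit A := by
  rw [← mulVec_injective_iff_isUnit, ← coe_mulVecLin, injective_iff_map_eq_zero]
  intro x hx
  have := h.mul_norm_le_card_mul_norm_mulVec x
  rw [coe_mulVecLin] at hx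
  rw [hx, norm_zero, mul_zero] at this
  exact norm_le_zero_iff.1 (nonpos_of_mul_nonpos_right this hε)

theorem linfty_opNorm_inv_le (h : A.CoerciveWith ε) (hε : 0 < ε) :
    ‖A⁻¹‖ ≤ Fintype.card ι / ε := by
  refine linfty_opNorm_le_of_mulVec_le (by positivity) fun y => ?_
  have := h.mul_norm_le_card_mul_norm_mulVec (A⁻¹ *ᵥ y)
  rw [mulVec_mulVec, mul_nonsing_inv _ ((isUnit_iff_isUnit_det A).1 (h.isUnit hε)),
    one_mulVec] at this
  rw [div_mul_eq_mul_div, le_div_iff₀ hε]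
  linarith

end Matrix.CoerciveWith

theorem Matrix.PosDef.mul_mul_transpose_of_isUnit [DecidableEq ι] {Q E : Matrix ι ι ℝ}
    (hQ : Q.PosDef) (hE : IsUnit E) : (E * Q * Eᵀ).PosDef := by
  simpa using hQ.mul_mul_conjTranspose_same (vecMul_injective_iff_isUnit.2 hE)

theorem IsCompact.exists_pos_coerciveWith {X : Type*} [TopologicalSpace X] {K : Set X}
    (hK : IsCompact K) {M : X → Matrix ι ι ℝ} (hM : Continuous M)
    (hpos : ∀ s ∈ K, (M s).PosDef) : ∃ c > 0, ∀ s ∈ K, (M s).CoerciveWith c := by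
  have hcont : Continuous fun p : X × (ι → ℝ) => p.2 ⬝ᵥ (M p.1 *ᵥ p.2) :=
    continuous_snd.dotProduct ((hM.comp continuous_fst).matrix_mulVec continuous_snd)
  obtain ⟨c, hc, hmin⟩ := (hK.prod (isCompact_sphere 0 1)).exists_forall_le' hcont.continuousOn
    (a := 0) fun p hp => by
      simpa using (hpos p.1 hp.1).dotProduct_mulVec_pos (ne_zero_of_mem_unit_sphere ⟨p.2, hp.2⟩)
  refine ⟨c, hc, fun s hs x => ?_⟩
  rcases eq_or_ne x 0 with rfl | hx
  · simp
  have hxn : 0 < ‖x‖ := norm_pos_iff.2 hx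
  have := hmin (s, ‖x‖⁻¹ • x) ⟨hs, by simp [norm_smul, hxn.ne']⟩
  rw [mulVec_smul, dotProduct_smul, smul_dotProduct, smul_smul, smul_eq_mul, ← mul_inv, ← sq,
    le_inv_mul_iff₀ (by positivity)] at this
  linarith

theorem dotProduct_intervalIntegral_mulVec {M : ℝ → Matrix ι ι ℝ} (hM : Continuous M)
    (a b : ℝ) (x : ι → ℝ) :
    x ⬝ᵥ ((∫ s in a..b, M s) *ᵥ x) = ∫ s in a..b, x ⬝ᵥ (M s *ᵥ x) := by
  let L : Matrix ι ι ℝ →L[ℝ] ℝ := LinearMap.toContinuousLinearMap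
    { toFun := fun N => x ⬝ᵥ (N *ᵥ x)
      map_add' := fun N N' => by simp [add_mulVec, dotProduct_add]
      map_smul' := fun r N => by simp [smul_mulVec, dotProduct_smul] }
  exact (L.intervalIntegral_comp_comm (hM.intervalIntegrable a b)).symm

theorem Matrix.coerciveWith_intervalIntegral {M : ℝ → Matrix ι ι ℝ} {t c : ℝ} (ht : 0 ≤ t)
    (hM : Continuous M) (hc : ∀ s ∈ Set.Icc 0 t, (M s).CoerciveWith c) :
    (∫ s in 0..t, M s).CoerciveWith (c * t) := by
  intro x
  rw [dotProduct_intervalIntegral_mulVec hM]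
  have := intervalIntegral.integral_mono_on ht (intervalIntegrable_const (μ := volume))
    ((continuous_const.dotProduct (hM.matrix_mulVec continuous_const)).intervalIntegrable 0 t)
    fun s hs => hc s hs x
  rw [intervalIntegral.integral_const, sub_zero, smul_eq_mul] at this
  linarith

theorem Qt_inv_norm_bound_general {n : ℕ} (Q B : Matrix (Fin n) (Fin n) ℝ)
    (hQpos : Q.PosDef) :
    ∃ C > 0, ∀ t : ℝ, 0 < t → t < 1 → ‖(Qmat Q B t)⁻¹‖ ≤ C / t := by
  have hexp : Continuous fun s : ℝ => NormedSpace.exp (s • B) :=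
    NormedSpace.exp_continuous.comp (continuous_id.smul continuous_const)
  have hM : Continuous fun s : ℝ => NormedSpace.exp (s • B) * Q * (NormedSpace.exp (s • B))ᵀ :=
    (hexp.mul continuous_const).mul hexp.matrix_transpose
  obtain ⟨c, hc, hcoer⟩ := isCompact_Icc.exists_pos_coerciveWith hM
    fun s _ => hQpos.mul_mul_transpose_of_isUnit (isUnit_exp (s • B))
  refine ⟨(n + 1) / c, by positivity, fun t ht ht1 => ?_⟩
  have hQt := coerciveWith_intervalIntegral ht.le hM fun s hs => hcoer s ⟨hs.1, hs.2.trans ht1.le⟩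
  calc ‖(Qmat Q B t)⁻¹‖ ≤ n / (c * t) := by
        simpa [Qmat] using hQt.linfty_opNorm_inv_le (by positivity)
    _ ≤ (n + 1) / c / t := by
        rw [div_div]
        gcongr
        linarith

theorem Qt_inv_norm_bound {n : ℕ} (Q B : Matrix (Fin n) (Fin n) ℝ)
    (hQsymm : Q.IsSymm) (hQpos : Q.PosDef) (hB : eigenvaluesNegRe B) :
    ∃ C > 0, ∀ t : ℝ, 0 < t → t < 1 → ‖(Qmat Q B t)⁻¹‖ ≤ C / t :=
  Qt_inv_norm_bound_general Q B hQpos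
end

section
/- With Q symmetric positive definite and B having all eigenvalues with negative real part, the determinant of Q_t = ∫₀^t e^{sB} Q e^{sB*} ds satisfies det Q_t = t^n · det Q · (1 + O(t)) as t → 0. -/
open MeasureTheory Matrix

attribute [local instance] Matrix.linftyOpNormedAddCommGroup Matrix.linftyOpNormedSpace
  Matrix.linftyOpNormedRing Matrix.linftyOpNormedAlgebra

/-! Near `s = 0` the integrand `e^{sB} Q e^{sBᵀ}` is `Q + O(s)`, so `Q_t = t Q + O(t²)`, that is
`t⁻¹ Q_t = Q + O(t)`. Since `det Q_t / (tⁿ det Q) = det (t⁻¹ Q_t) / det Q` and the determinant is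
differentiable at `Q`, this ratio is `1 + O(t)`. -/

open Asymptotics Filter Topology

theorem Asymptotics.IsBigO.exists_pos_bound_nhdsGT_zero {E : Type*} [Norm E] {f : ℝ → E}
    (h : f =O[𝓝[>] 0] id) : ∃ C > 0, ∃ t₀ > 0, ∀ t : ℝ, 0 < t → t < t₀ → ‖f t‖ ≤ C * t := by
  obtain ⟨C, hC, hf⟩ := h.exists_pos
  obtain ⟨t₀, ht₀, hbound⟩ := (nhdsGT_basis (0 : ℝ)).eventually_iff.1 hf.bound
  refine ⟨C, hC, t₀, ht₀, fun t ht htt => ?_⟩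
  simpa [abs_of_pos ht] using hbound ⟨ht, htt⟩

theorem isBigO_integral_sub_smul_sq {E : Type*} [NormedAddCommGroup E] [NormedSpace ℝ E]
    [CompleteSpace E] {g : ℝ → E} (hg : Continuous g) (hg₀ : DifferentiableAt ℝ g 0) :
    (fun t => (∫ s in (0 : ℝ)..t, g s) - t • g 0) =O[𝓝 0] fun t => t ^ 2 := by
  obtain ⟨c, hc, hlin⟩ := hg₀.hasDerivAt.isBigO_sub.exists_pos
  obtain ⟨ε, hε, hnear⟩ := Metric.eventually_nhds_iff.1 hlin.bound
  refine IsBigO.of_bound c (Metric.eventually_nhds_iff.2 ⟨ε, hε, fun t ht => ?_⟩)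
  have hsub : (∫ s in (0 : ℝ)..t, g s) - t • g 0 = ∫ s in (0 : ℝ)..t, (g s - g 0) := by
    rw [intervalIntegral.integral_sub (hg.intervalIntegrable _ _) intervalIntegrable_const,
      intervalIntegral.integral_const, sub_zero]
  have hbound : ∀ s ∈ Set.uIoc 0 t, ‖g s - g 0‖ ≤ c * |t| := by
    intro s hs
    have hst : |s| ≤ |t| := by
      simpa using Set.abs_sub_left_of_mem_uIcc (Set.uIoc_subset_uIcc hs)
    calc ‖g s - g 0‖ ≤ c * ‖s - 0‖ := hnear (by simpa using hst.trans_lt (by simpa using ht))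
      _ ≤ c * |t| := by simpa using mul_le_mul_of_nonneg_left hst hc.le
  calc ‖(∫ s in (0 : ℝ)..t, g s) - t • g 0‖ ≤ c * |t| * |t - 0| := by
        rw [hsub]; exact intervalIntegral.norm_integral_le_of_norm_le_const hbound
    _ = c * ‖t ^ 2‖ := by simp [mul_assoc, sq]

namespace Matrix

variable {ι : Type*} [Fintype ι] [DecidableEq ι]

theorem contDiff_det {k : WithTop ℕ∞} : ContDiff ℝ k (fun M : Matrix ι ι ℝ => M.det) := by
  simp only [det_apply]
  refine ContDiff.sum fun σ _ => (contDiff_prod fun i _ => ?_).const_smul _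
  exact (LinearMap.toContinuousLinearMap (entryLinearMap ℝ ℝ (σ i) i)).contDiff

theorem isBigO_det_sub (A : Matrix ι ι ℝ) :
    (fun M : Matrix ι ι ℝ => M.det - A.det) =O[𝓝 A] fun M => M - A :=
  ((contDiff_det (k := 1)).differentiable one_ne_zero A).hasFDerivAt.isBigO_sub

theorem differentiable_exp_smul_mul_mul_transpose (Q B : Matrix ι ι ℝ) :
    Differentiable ℝ fun s : ℝ =>
      NormedSpace.exp (s • B) * Q * (NormedSpace.exp (s • B))ᵀ := by
  have hexp : ∀ A : Matrix ι ι ℝ, Differentiable ℝ fun s : ℝ => NormedSpace.exp (s • A) :=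
    fun A s => (hasDerivAt_exp_smul_const' A s).differentiableAt
  simp_rw [← exp_transpose, transpose_smul]
  exact ((hexp B).mul_const Q).mul (hexp Bᵀ)

end Matrix

section Covariance

variable {n : ℕ} (Q B : Matrix (Fin n) (Fin n) ℝ)

theorem isBigO_Qmat_sub_smul : (fun t => Qmat Q B t - t • Q) =O[𝓝 0] fun t => t ^ 2 := by
  have hg := Matrix.differentiable_exp_smul_mul_mul_transpose Q B
  simpa [Qmat] using isBigO_integral_sub_smul_sq hg.continuous (hg 0)

theorem isBigO_inv_smul_Qmat_sub : (fun t => t⁻¹ • Qmat Q B t - Q) =O[𝓝[>] 0] id := by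
  have h := (isBigO_refl (fun t : ℝ => t⁻¹) (𝓝[>] 0)).smul
    ((isBigO_Qmat_sub_smul Q B).mono nhdsWithin_le_nhds)
  refine h.congr' ?_ ?_ <;> filter_upwards [self_mem_nhdsWithin] with t (ht : 0 < t)
  · rw [smul_sub, smul_smul, inv_mul_cancel₀ ht.ne', one_smul]
  · simp [sq, ht.ne']

theorem isBigO_det_inv_smul_Qmat_sub :
    (fun t => (t⁻¹ • Qmat Q B t).det - Q.det) =O[𝓝[>] 0] id := by
  have h := isBigO_inv_smul_Qmat_sub Q B
  have hlim : Tendsto (fun t => t⁻¹ • Qmat Q B t) (𝓝[>] 0) (𝓝 Q) :=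
    tendsto_sub_nhds_zero_iff.1 (h.trans_tendsto (tendsto_id.mono_left nhdsWithin_le_nhds))
  exact ((Matrix.isBigO_det_sub Q).comp_tendsto hlim).trans h

end Covariance

theorem Qt_det_approx_general {n : ℕ} (Q B : Matrix (Fin n) (Fin n) ℝ)
    (hQpos : Q.PosDef) :
    ∃ C > 0, ∃ t₀ > 0, ∀ t : ℝ, 0 < t → t < t₀ →
      |(Qmat Q B t).det / (t ^ n * Q.det) - 1| ≤ C * t := by
  have hQ : Q.det ≠ 0 := hQpos.det_pos.ne'
  have h := (isBigO_det_inv_smul_Qmat_sub Q B).const_mul_left (Q.det)⁻¹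
  refine (h.congr' ?_ EventuallyEq.rfl).exists_pos_bound_nhdsGT_zero
  filter_upwards [self_mem_nhdsWithin] with t (ht : 0 < t)
  rw [Matrix.det_smul, Fintype.card_fin, inv_pow]
  field_simp

theorem Qt_det_approx {n : ℕ} (Q B : Matrix (Fin n) (Fin n) ℝ)
    (hQsymm : Q.IsSymm) (hQpos : Q.PosDef) (hB : eigenvaluesNegRe B) :
    ∃ C > 0, ∃ t₀ > 0, ∀ t : ℝ, 0 < t → t < t₀ →
      |(Qmat Q B t).det / (t ^ n * Q.det) - 1| ≤ C * t :=
  Qt_det_approx_general Q B hQpos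
end

section
/- The time derivative of the Mehler kernel satisfies ∂_t K_t(x,u) = K_t(x,u) · N_t^{(0)}(x,u), where N_t^{(0)}(x,u) = −½ tr(Q_t^{−1} e^{tB} Q e^{tB*}) + ½ |Q^{1/2} e^{tB*} Q_t^{−1}(u − D_t x)|² − ⟨Q_∞ B* Q_∞^{−1} D_t x, (Q_t^{−1} − Q_∞^{−1})(u − D_t x)⟩, for all x, u ∈ ℝⁿ and t > 0. -/
/-!
Write `K_t = √(det Q_∞ / det Q_t) · e^{R(x)} · exp(-½ q_t)` with
`q_t = ⟨(Q_t⁻¹ - Q_∞⁻¹) w_t, w_t⟩` and `w_t = u - D_t x`, and differentiate factor by factor.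
By the fundamental theorem of calculus `Q_t' = e^{tB} Q e^{tB*}`, and `Q_t` is positive definite
for `t > 0`. Jacobi's formula `(det Q_t)' = det Q_t · tr(Q_t⁻¹ Q_t')` produces the trace term,
`(Q_t⁻¹)' = -Q_t⁻¹ Q_t' Q_t⁻¹` produces `|Q^{1/2} e^{tB*} Q_t⁻¹ w_t|²`, and
`w_t' = Q_∞ B* Q_∞⁻¹ D_t x` produces the cross term, the two halves of which agree because
`Q_t⁻¹ - Q_∞⁻¹` is symmetric.
-/

open MeasureTheory Matrix

attribute [local instance] Matrix.linftyOpNormedAddCommGroup Matrix.linftyOpNormedSpace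
  Matrix.linftyOpNormedRing Matrix.linftyOpNormedAlgebra

/-- The one-parameter family `D_t = Q_∞ e^{-tB^*} Q_∞^{-1}`. -/
noncomputable def Dmat {n : ℕ} (Q B : Matrix (Fin n) (Fin n) ℝ) (t : ℝ) :
    Matrix (Fin n) (Fin n) ℝ :=
  Qinf Q B * NormedSpace.exp (-(t • Bᵀ)) * (Qinf Q B)⁻¹


/-- The quadratic form `R(x) = ½⟨Q_∞⁻¹ x, x⟩`. -/
noncomputable def Rquad {n : ℕ} (Q B : Matrix (Fin n) (Fin n) ℝ) (x : Fin n → ℝ) : ℝ :=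
  (1 / 2) * ((Qinf Q B)⁻¹.mulVec x ⬝ᵥ x)

/-- The Mehler kernel of the Ornstein--Uhlenbeck semigroup. -/
noncomputable def mehlerK {n : ℕ} (Q B : Matrix (Fin n) (Fin n) ℝ) (t : ℝ)
    (x u : Fin n → ℝ) : ℝ :=
  Real.sqrt ((Qinf Q B).det / (Qmat Q B t).det) * Real.exp (Rquad Q B x) *
    Real.exp (-(1 / 2) *
      ((((Qmat Q B t)⁻¹ - (Qinf Q B)⁻¹).mulVec (u - (Dmat Q B t).mulVec x)) ⬝ᵥ
        (u - (Dmat Q B t).mulVec x)))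

/-- The Euclidean norm on ℝ^n. -/
noncomputable def euclNorm {n : ℕ} (v : Fin n → ℝ) : ℝ :=
  Real.sqrt (∑ i, v i ^ 2)

/-- The logarithmic time derivative `N_t^{(0)}(x,u)` of the Mehler kernel; here
`|Q^{1/2} w|²` is written as `⟨Q w, w⟩`. -/
noncomputable def N0 {n : ℕ} (Q B : Matrix (Fin n) (Fin n) ℝ) (t : ℝ)
    (x u : Fin n → ℝ) : ℝ :=
  -(1 / 2) * ((Qmat Q B t)⁻¹ * NormedSpace.exp (t • B) * Q *
      (NormedSpace.exp (t • B))ᵀ).trace +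
  (1 / 2) * (Q.mulVec ((NormedSpace.exp (t • B))ᵀ.mulVec
        ((Qmat Q B t)⁻¹.mulVec (u - (Dmat Q B t).mulVec x))) ⬝ᵥ
      (NormedSpace.exp (t • B))ᵀ.mulVec
        ((Qmat Q B t)⁻¹.mulVec (u - (Dmat Q B t).mulVec x))) -
  ((Qinf Q B * Bᵀ * (Qinf Q B)⁻¹).mulVec ((Dmat Q B t).mulVec x) ⬝ᵥ
    ((Qmat Q B t)⁻¹ - (Qinf Q B)⁻¹).mulVec (u - (Dmat Q B t).mulVec x))
namespace Matrix

theorem PosDef.isSymm {m : Type*} {A : Matrix m m ℝ} (hA : A.PosDef) : A.IsSymm :=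
  isHermitian_iff_isSymm.1 hA.isHermitian

variable {m : Type*} [Fintype m]

theorem sum_det_updateRow_eq_trace_adjugate_mul [DecidableEq m] {R : Type*} [CommRing R]
    (A A' : Matrix m m R) : ∑ i, (A.updateRow i (A' i)).det = (A.adjugate * A').trace := by
  simp only [← cramer_transpose_apply, cramer_eq_adjugate_mulVec, trace, diag_apply, mul_apply,
    mulVec, dotProduct, ← adjugate_transpose, transpose_apply]
  exact Finset.sum_comm

theorem trace_adjugate_mul_div_det [DecidableEq m] {K : Type*} [Field K] (A F : Matrix m m K)
    (hA : A.det ≠ 0) : (A.adjugate * F).trace / A.det = (A⁻¹ * F).trace := by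
  rw [inv_def, Ring.inverse_eq_inv', smul_mul_assoc, trace_smul, smul_eq_mul]
  field_simp

theorem IsSymm.mul_mul_transpose_mul_mulVec_dotProduct {R : Type*} [CommSemiring R]
    {S : Matrix m m R} (hS : S.IsSymm) (E Q : Matrix m m R) (w : m → R) :
    (S * (E * Q * Eᵀ) * S) *ᵥ w ⬝ᵥ w = Q *ᵥ (Eᵀ *ᵥ (S *ᵥ w)) ⬝ᵥ Eᵀ *ᵥ (S *ᵥ w) := by
  have hconj : S * (E * Q * Eᵀ) * S = (Eᵀ * S)ᵀ * (Q * (Eᵀ * S)) := by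
    rw [transpose_mul, transpose_transpose, hS.eq]
    simp only [mul_assoc]
  rw [hconj, ← mulVec_mulVec, ← mulVec_mulVec, dotProduct_comm, dotProduct_mulVec,
    vecMul_transpose, dotProduct_comm]
  simp only [← mulVec_mulVec]

theorem IsSymm.integral {X : Type*} [MeasurableSpace X] {μ : Measure X} {f : X → Matrix m m ℝ}
    (hf : ∀ x, (f x).IsSymm) : (∫ x, f x ∂μ).IsSymm := by
  let T : Matrix m m ℝ ≃L[ℝ] Matrix m m ℝ :=
    (transposeLinearEquiv m m ℝ ℝ).toContinuousLinearEquiv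
  calc (∫ x, f x ∂μ)ᵀ = T (∫ x, f x ∂μ) := rfl
    _ = ∫ x, T (f x) ∂μ := (T.integral_comp_comm f).symm
    _ = ∫ x, f x ∂μ := integral_congr_ae (.of_forall fun x => (hf x).eq)

theorem PosDef.intervalIntegral {f : ℝ → Matrix m m ℝ} (hf : Continuous f)
    (hpos : ∀ s, (f s).PosDef) {a b : ℝ} (hab : a < b) : (∫ s in a..b, f s).PosDef := by
  refine .of_dotProduct_mulVec_pos ?_ fun x hx => ?_
  · rw [isHermitian_iff_isSymm, intervalIntegral.integral_of_le hab.le]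
    exact IsSymm.integral fun s => (hpos s).isSymm
  · let q : Matrix m m ℝ →L[ℝ] ℝ := LinearMap.toContinuousLinearMap
      (dotProductBilin ℝ ℝ (star x) ∘ₗ (mulVecBilin ℝ ℝ).flip x)
    have hq : ∀ M, q M = star x ⬝ᵥ M *ᵥ x := fun _ => rfl
    have hcomm : ∫ s in a..b, q (f s) = q (∫ s in a..b, f s) :=
      q.intervalIntegral_comp_comm (hf.intervalIntegrable a b)
    rw [← hq, ← hcomm]
    exact intervalIntegral.intervalIntegral_pos_of_pos_on
      ((q.continuous.comp hf).intervalIntegrable a b)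
      (fun s _ => (hpos s).dotProduct_mulVec_pos hx) hab

end Matrix

section MatrixCalculus

variable {m : Type*} [Fintype m] {𝕜 : Type*} [RCLike 𝕜]
  {A : 𝕜 → Matrix m m 𝕜} {A' : Matrix m m 𝕜} {t : 𝕜}

theorem HasDerivAt.matrix_det [DecidableEq m] (hA : HasDerivAt A A' t) :
    HasDerivAt (fun τ => (A τ).det) ((A t).adjugate * A').trace t := by
  -- `rows` is the identity, from the operator norm on matrices to the sup norm on rows.
  let rows : Matrix m m 𝕜 →L[𝕜] (m → m → 𝕜) :=
    LinearMap.toContinuousLinearMap (ofLinearEquiv 𝕜).symm.toLinearMap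
  let detRows : ContinuousMultilinearMap 𝕜 (fun _ : m => m → 𝕜) 𝕜 :=
    { (detRowAlternating : (m → 𝕜) [⋀^m]→ₗ[𝕜] 𝕜).toMultilinearMap with
      cont := continuous_id.matrix_det }
  have h := (detRows.hasFDerivAt (rows (A t))).comp_hasDerivAt t
    (rows.hasFDerivAt.comp_hasDerivAt t hA)
  rw [ContinuousMultilinearMap.linearDeriv_apply] at h
  exact h.congr_deriv (sum_det_updateRow_eq_trace_adjugate_mul _ _)

theorem HasDerivAt.matrix_inv [DecidableEq m] (hA : HasDerivAt A A' t)
    (hdet : IsUnit (A t).det) :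
    HasDerivAt (fun τ => (A τ)⁻¹) (-((A t)⁻¹ * A' * (A t)⁻¹)) t := by
  obtain ⟨U, hU⟩ := (isUnit_iff_isUnit_det _).2 hdet
  have hinv := hasFDerivAt_ringInverse (𝕜 := 𝕜) U
  rw [hU] at hinv
  have h := hinv.comp_hasDerivAt t hA
  simp only [Function.comp_def, ← nonsing_inv_eq_ringInverse] at h
  refine h.congr_deriv ?_
  simp [hU]

theorem HasDerivAt.matrix_mulVec {n : Type*} [Fintype n] {M : 𝕜 → Matrix m n 𝕜}
    {M' : Matrix m n 𝕜} {v : 𝕜 → n → 𝕜} {v' : n → 𝕜} (hM : HasDerivAt M M' t)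
    (hv : HasDerivAt v v' t) :
    HasDerivAt (fun τ => M τ *ᵥ v τ) (M t *ᵥ v' + M' *ᵥ v t) t :=
  let L : Matrix m n 𝕜 →L[𝕜] (n → 𝕜) →L[𝕜] (m → 𝕜) := LinearMap.toContinuousLinearMap
    (LinearMap.toContinuousLinearMap.toLinearMap ∘ₗ mulVecBilin 𝕜 𝕜)
  L.hasDerivAt_of_bilinear (fun _ => hM) (fun _ => hv)

theorem HasDerivAt.dotProduct {v w : 𝕜 → m → 𝕜} {v' w' : m → 𝕜} (hv : HasDerivAt v v' t)
    (hw : HasDerivAt w w' t) :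
    HasDerivAt (fun τ => v τ ⬝ᵥ w τ) (v t ⬝ᵥ w' + v' ⬝ᵥ w t) t :=
  let L : (m → 𝕜) →L[𝕜] (m → 𝕜) →L[𝕜] 𝕜 := LinearMap.toContinuousLinearMap
    (LinearMap.toContinuousLinearMap.toLinearMap ∘ₗ dotProductBilin 𝕜 𝕜)
  L.hasDerivAt_of_bilinear (fun _ => hv) (fun _ => hw)

theorem HasDerivAt.mulVec_dotProduct_self {M : 𝕜 → Matrix m m 𝕜} {M' : Matrix m m 𝕜}
    {w : 𝕜 → m → 𝕜} {w' : m → 𝕜} (hM : HasDerivAt M M' t) (hw : HasDerivAt w w' t)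
    (hsymm : (M t).IsSymm) :
    HasDerivAt (fun τ => M τ *ᵥ w τ ⬝ᵥ w τ) (M' *ᵥ w t ⬝ᵥ w t + 2 * (w' ⬝ᵥ M t *ᵥ w t)) t := by
  refine ((hM.matrix_mulVec hw).dotProduct hw).congr_deriv ?_
  have hcomm : M t *ᵥ w' ⬝ᵥ w t = w' ⬝ᵥ M t *ᵥ w t := by
    rw [dotProduct_comm, dotProduct_mulVec, ← mulVec_transpose, hsymm.eq, dotProduct_comm]
  rw [add_dotProduct, hcomm, dotProduct_comm (M t *ᵥ w t)]
  ring

end MatrixCalculus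

theorem HasDerivAt.sqrt_const_div {d : ℝ → ℝ} {d' t : ℝ} (c : ℝ) (hd : HasDerivAt d d' t)
    (hpos : 0 < d t) :
    HasDerivAt (fun τ => √(c / d τ)) (√(c / d t) * (-(1 / 2) * (d' / d t))) t := by
  have hsqrt : 0 < √(d t) := Real.sqrt_pos.2 hpos
  have hloc : (fun τ => √c * (√(d τ))⁻¹) =ᶠ[nhds t] fun τ => √(c / d τ) := by
    filter_upwards [hd.continuousAt.eventually (lt_mem_nhds hpos)] with τ hτ
    rw [Real.sqrt_div' c hτ.le, div_eq_mul_inv]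
  refine (((hd.sqrt hpos.ne').inv hsqrt.ne').const_mul √c).congr_of_eventuallyEq hloc.symm
    |>.congr_deriv ?_
  rw [Real.sqrt_div' c hpos.le]
  field_simp
  rw [Real.sq_sqrt hpos.le]

section Mehler

open NormedSpace

variable {n : ℕ} (Q B : Matrix (Fin n) (Fin n) ℝ)

theorem continuous_exp_smul_mul_mul_transpose :
    Continuous fun s : ℝ => exp (s • B) * Q * (exp (s • B))ᵀ := by
  have hexp : Continuous fun s : ℝ => exp (s • B) :=
    exp_continuous.comp (continuous_id.smul continuous_const)
  exact (hexp.mul continuous_const).mul hexp.matrix_transpose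

theorem hasDerivAt_Qmat (t : ℝ) :
    HasDerivAt (Qmat Q B) (exp (t • B) * Q * (exp (t • B))ᵀ) t :=
  ((continuous_exp_smul_mul_mul_transpose Q B).integral_hasStrictDerivAt 0 t).hasDerivAt

theorem posDef_Qmat {Q : Matrix (Fin n) (Fin n) ℝ} (hQ : Q.PosDef) {t : ℝ} (ht : 0 < t) :
    (Qmat Q B t).PosDef := by
  refine PosDef.intervalIntegral (continuous_exp_smul_mul_mul_transpose Q B) (fun s => ?_) ht
  simpa only [conjTranspose_eq_transpose_of_trivial] using
    hQ.mul_mul_conjTranspose_same (vecMul_injective_of_isUnit (Matrix.isUnit_exp (s • B)))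

theorem isSymm_Qinf {Q : Matrix (Fin n) (Fin n) ℝ} (hQ : Q.IsSymm) : (Qinf Q B).IsSymm :=
  IsSymm.integral fun s => by
    rw [IsSymm, transpose_mul, transpose_mul, transpose_transpose, hQ.eq, mul_assoc]

theorem hasDerivAt_Dmat (t : ℝ) :
    HasDerivAt (Dmat Q B) (-(Qinf Q B * Bᵀ * (Qinf Q B)⁻¹ * Dmat Q B t)) t := by
  have hexp : HasDerivAt (fun τ : ℝ => exp (-(τ • Bᵀ))) (-(Bᵀ * exp (-(t • Bᵀ)))) t := by
    have h := hasDerivAt_exp_smul_const' (𝕂 := ℝ) (-Bᵀ) t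
    simp only [smul_neg, neg_mul] at h
    exact h
  refine ((hexp.const_mul (Qinf Q B)).mul_const (Qinf Q B)⁻¹).congr_deriv ?_
  by_cases hC : IsUnit (Qinf Q B).det
  · simp only [Dmat, mul_neg, neg_mul, mul_assoc, nonsing_inv_mul_cancel_left _ _ hC]
  · simp [nonsing_inv_apply_not_isUnit _ hC]

end Mehler

theorem mehlerK_deriv_general {n : ℕ} (Q B : Matrix (Fin n) (Fin n) ℝ)
    (hQpos : Q.PosDef)
    (x u : Fin n → ℝ) (t : ℝ) (ht : 0 < t) :
    HasDerivAt (fun τ => mehlerK Q B τ x u) (mehlerK Q B t x u * N0 Q B t x u) t := by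
  have hQt := posDef_Qmat B hQpos ht
  have hw : HasDerivAt (fun τ => u - Dmat Q B τ *ᵥ x)
      ((Qinf Q B * Bᵀ * (Qinf Q B)⁻¹) *ᵥ (Dmat Q B t *ᵥ x)) t := by
    have hDx := (hasDerivAt_Dmat Q B t).matrix_mulVec (hasDerivAt_const t x)
    refine (hDx.const_sub u).congr_deriv ?_
    simp only [mulVec_zero, neg_mulVec, zero_add, neg_neg, mulVec_mulVec]
  have hq := (((hasDerivAt_Qmat Q B t).matrix_inv hQt.det_pos.ne'.isUnit).sub_const
    (Qinf Q B)⁻¹).mulVec_dotProduct_self hw (hQt.isSymm.inv.sub (isSymm_Qinf B hQpos.isSymm).inv)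
  have hK := (((hasDerivAt_Qmat Q B t).matrix_det.sqrt_const_div (Qinf Q B).det
    hQt.det_pos).mul_const (Real.exp (Rquad Q B x))).mul (hq.const_mul (-(1 / 2))).exp
  refine hK.congr_deriv ?_
  rw [trace_adjugate_mul_div_det _ _ hQt.det_pos.ne', neg_mulVec, neg_dotProduct,
    hQt.isSymm.inv.mul_mul_transpose_mul_mulVec_dotProduct]
  simp only [mehlerK, N0, mul_assoc]
  ring

theorem mehlerK_deriv {n : ℕ} (Q B : Matrix (Fin n) (Fin n) ℝ)
    (hQsymm : Q.IsSymm) (hQpos : Q.PosDef) (hB : eigenvaluesNegRe B)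
    (x u : Fin n → ℝ) (t : ℝ) (ht : 0 < t) :
    HasDerivAt (fun τ => mehlerK Q B τ x u) (mehlerK Q B t x u * N0 Q B t x u) t :=
  mehlerK_deriv_general Q B hQpos x u t ht
end
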